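/- Let E be an AL-space and let (S_t)_{t∈J}, (T_t)_{t∈J} be bounded positive semigroups (J = ℕ or (0,∞)) such that ‖(S_t f − T_t f)⁻‖ → 0 as t → ∞ for all f ∈ E₊. If (T_t) converges strongly to an operator P with ‖Pf‖ ≥ ε‖f‖ for all f ∈ E₊ and some ε > 0, then (S_t) converges strongly as well. -/

import Mathlib

/-!
Decompose `S t g = T t g + (S t g - T t g)⁺ - (S t g - T t g)⁻`. For `g ≥ 0` the first term tends
to `P g` and the last one to `0`, so the oscillation of the orbit `t ↦ S t g` is at most
`2 Λ g`, where `Λ g = limsup ‖(S t g - T t g)⁺‖`. Restarting the semigroup at a time `t` shows that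
the oscillation of the orbit of `g` is at most that of `q = (S t g - T t g)⁺`, up to errors that
vanish as `t → ∞`; here one needs `(S s (P g) - P g)⁺ → 0`. Comparing `S s q` with
`T s q → P q`, where `‖P q‖ ≥ ε ‖q‖`, and using that the norm is additive on positive elements gives
`Λ q + ε ‖q‖ ≤ Λ g` up to the same errors. Choosing `t` with `‖q‖ ≈ Λ g` yields
`Λ q ≲ (1 - ε) Λ g`, so by iteration the oscillation is at most `2 (1 - ε)ᵏ Λ g` for every `k`:
the orbit is Cauchy.
-/

open Filter Topology

section BanachLattice

variable {E : Type*} [NormedAddCommGroup E] [Lattice E] [IsOrderedAddMonoid E]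

lemma norm_le_norm_of_nonneg_of_le [HasSolidNorm E] {a b : E} (ha : 0 ≤ a) (hab : a ≤ b) :
    ‖a‖ ≤ ‖b‖ :=
  norm_le_norm_of_abs_le_abs <| by rwa [abs_of_nonneg ha, abs_of_nonneg (ha.trans hab)]

lemma norm_posPart_sub_le [HasSolidNorm E] {a b : E} (ha : 0 ≤ a) (hb : 0 ≤ b) :
    ‖(a - b)⁺‖ ≤ ‖a‖ :=
  norm_le_norm_of_nonneg_of_le (posPart_nonneg _) (sup_le (sub_le_self a hb) ha)

lemma norm_add_norm_posPart_sub_le (hAL : ∀ f g : E, 0 ≤ f → 0 ≤ g → ‖f + g‖ = ‖f‖ + ‖g‖)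
    {a b : E} (hb : 0 ≤ b) : ‖b‖ + ‖(a - b)⁺‖ ≤ ‖a‖ + ‖(a - b)⁻‖ := by
  have hsum : b + (a - b)⁺ = a + (a - b)⁻ := by
    have := posPart_sub_negPart (a - b)
    linear_combination (norm := abel) this
  rw [← hAL _ _ hb (posPart_nonneg _), hsum]
  exact norm_add_le _ _

end BanachLattice

lemma le_of_forall_pos_le_add_mul {a b : ℝ} (K : ℝ) (h : ∀ σ > 0, a ≤ b + K * σ) : a ≤ b := by
  have hlim : Tendsto (fun σ => b + K * σ) (𝓝[>] 0) (𝓝 b) :=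
    tendsto_nhdsWithin_of_tendsto_nhds
      ((by fun_prop : Continuous fun σ : ℝ => b + K * σ).tendsto' 0 b (by simp))
  exact ge_of_tendsto hlim (eventually_nhdsWithin_of_forall h)

section Domination

variable {E : Type*} [NormedAddCommGroup E] [NormedSpace ℝ E] {J : Type*}

noncomputable def orbitOscillation (l : Filter J) (S : J → E →L[ℝ] E) (g : E) : ℝ :=
  limsup (fun z : J × J => ‖S z.1 g - S z.2 g‖) (l ×ˢ l)

lemma orbitOscillation_le {l : Filter J} [l.NeBot] {S : J → E →L[ℝ] E} {g : E} {b : ℝ}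
    (hb : ∀ᶠ z in l ×ˢ l, ‖S z.1 g - S z.2 g‖ ≤ b) : orbitOscillation l S g ≤ b :=
  limsup_le_of_le (isCoboundedUnder_le_of_le _ fun _ => norm_nonneg _) hb

variable [Lattice E]

def excess (S T : J → E →L[ℝ] E) (t : J) (g : E) : E := (S t g - T t g)⁺

def deficit (S T : J → E →L[ℝ] E) (t : J) (g : E) : E := (S t g - T t g)⁻

lemma excess_nonneg [IsOrderedAddMonoid E] (S T : J → E →L[ℝ] E) (t : J) (g : E) :
    0 ≤ excess S T t g :=
  posPart_nonneg _

lemma excess_sub_deficit [IsOrderedAddMonoid E] (S T : J → E →L[ℝ] E) (t : J) (g : E) :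
    excess S T t g - deficit S T t g = S t g - T t g :=
  posPart_sub_negPart _

noncomputable def limsupExcess (l : Filter J) (S T : J → E →L[ℝ] E) (g : E) : ℝ :=
  limsup (fun t => ‖excess S T t g‖) l

lemma frequently_lt_norm_excess {l : Filter J} [l.NeBot] {S T : J → E →L[ℝ] E} {g : E} {b : ℝ}
    (hb : b < limsupExcess l S T g) : ∃ᶠ t in l, b < ‖excess S T t g‖ :=
  frequently_lt_of_lt_limsup (isCoboundedUnder_le_of_le l fun _ => norm_nonneg _) hb

lemma limsupExcess_le {l : Filter J} [l.NeBot] {S T : J → E →L[ℝ] E} {g : E} {b : ℝ}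
    (hb : ∀ᶠ t in l, ‖excess S T t g‖ ≤ b) : limsupExcess l S T g ≤ b :=
  limsup_le_of_le (isCoboundedUnder_le_of_le l fun _ => norm_nonneg _) hb

variable [AddCommSemigroup J]

/-- The hypotheses of the theorem for semigroups indexed by an abstract time semigroup `J`
(`ℕ` or `(0, ∞)`), with `t → ∞` replaced by a shift-invariant filter `l`. -/
structure AsymptoticDomination (l : Filter J) (S T : J → E →L[ℝ] E) (P : E →L[ℝ] E) (M ε : ℝ) :
    Prop where
  norm_add_of_nonneg : ∀ f g : E, 0 ≤ f → 0 ≤ g → ‖f + g‖ = ‖f‖ + ‖g‖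
  map_add_right : ∀ t, map (· + t) l = l
  S_add : ∀ s t, S (s + t) = (S s).comp (S t)
  T_add : ∀ s t, T (s + t) = (T s).comp (T t)
  S_nonneg : ∀ t f, 0 ≤ f → 0 ≤ S t f
  T_nonneg : ∀ t f, 0 ≤ f → 0 ≤ T t f
  norm_S_le : ∀ t, ‖S t‖ ≤ M
  tendsto_norm_deficit : ∀ f, 0 ≤ f → Tendsto (fun t => ‖deficit S T t f‖) l (𝓝 0)
  tendsto_T : ∀ f, Tendsto (fun t => T t f) l (𝓝 (P f))
  eps_pos : 0 < ε
  eps_mul_norm_le : ∀ f, 0 ≤ f → ε * ‖f‖ ≤ ‖P f‖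

namespace AsymptoticDomination

variable {l : Filter J} {S T : J → E →L[ℝ] E} {P : E →L[ℝ] E} {M ε : ℝ}

lemma of_le (h : AsymptoticDomination l S T P M ε) {ε' : ℝ} (hε' : 0 < ε') (hε'ε : ε' ≤ ε) :
    AsymptoticDomination l S T P M ε' :=
  { h with
    eps_pos := hε'
    eps_mul_norm_le := fun f hf =>
      (mul_le_mul_of_nonneg_right hε'ε (norm_nonneg f)).trans (h.eps_mul_norm_le f hf) }

lemma tendsto_add_right (h : AsymptoticDomination l S T P M ε) (t : J) :
    Tendsto (· + t) l l :=
  (h.map_add_right t).le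

lemma M_nonneg (h : AsymptoticDomination l S T P M ε) [l.NeBot] : 0 ≤ M :=
  let ⟨t⟩ := l.nonempty_of_neBot
  (norm_nonneg _).trans (h.norm_S_le t)

lemma norm_S_apply_le (h : AsymptoticDomination l S T P M ε) (t : J) (x : E) :
    ‖S t x‖ ≤ M * ‖x‖ :=
  (S t).le_of_opNorm_le (h.norm_S_le t) x

lemma tendsto_norm_T_sub_P (h : AsymptoticDomination l S T P M ε) (g : E) :
    Tendsto (fun t => ‖T t g - P g‖) l (𝓝 0) :=
  tendsto_iff_norm_sub_tendsto_zero.1 (h.tendsto_T g)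

lemma T_apply_P (h : AsymptoticDomination l S T P M ε) [l.NeBot] (s : J) (g : E) :
    T s (P g) = P g := by
  have hP : Tendsto (fun u => T (u + s) g) l (𝓝 (P g)) :=
    (h.tendsto_T g).comp (h.tendsto_add_right s)
  have hTP : Tendsto (fun u => T (u + s) g) l (𝓝 (T s (P g))) := by
    simp_rw [add_comm _ s, h.T_add, ContinuousLinearMap.comp_apply]
    exact ((T s).continuous.tendsto _).comp (h.tendsto_T g)
  exact tendsto_nhds_unique hTP hP

lemma P_apply_P (h : AsymptoticDomination l S T P M ε) [l.NeBot] (g : E) : P (P g) = P g :=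
  tendsto_nhds_unique (h.tendsto_T (P g)) (by simp only [h.T_apply_P]; exact tendsto_const_nhds)

lemma eventually_lt_of_orbitOscillation_lt (h : AsymptoticDomination l S T P M ε) {g : E} {b : ℝ}
    (hb : orbitOscillation l S g < b) : ∀ᶠ z in l ×ˢ l, ‖S z.1 g - S z.2 g‖ < b :=
  eventually_lt_of_limsup_lt hb <| isBoundedUnder_of ⟨M * ‖g‖ + M * ‖g‖, fun _ =>
    (norm_sub_le _ _).trans (add_le_add (h.norm_S_apply_le _ g) (h.norm_S_apply_le _ g))⟩

lemma norm_S_add_apply_sub_le [IsOrderedAddMonoid E] (h : AsymptoticDomination l S T P M ε)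
    [l.NeBot] (s t : J) (g : E) :
    ‖S (s + t) g - (P g + excess S T s (P g) + S s (excess S T t g))‖ ≤
      M * (‖T t g - P g‖ + ‖deficit S T t g‖) + ‖deficit S T s (P g)‖ := by
  have hdec_t := congrArg (S s) (excess_sub_deficit S T t g)
  have hdec_s := excess_sub_deficit S T s (P g)
  have hid : S (s + t) g - (P g + excess S T s (P g) + S s (excess S T t g)) =
      S s (T t g - P g) - S s (deficit S T t g) - deficit S T s (P g) := by
    rw [h.S_add, ContinuousLinearMap.comp_apply]
    rw [h.T_apply_P] at hdec_s
    simp only [map_sub] at hdec_t ⊢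
    linear_combination (norm := abel) -hdec_t - hdec_s
  rw [hid, mul_add]
  refine (norm_sub_le _ _).trans (add_le_add_left ((norm_sub_le _ _).trans ?_) _)
  exact add_le_add (h.norm_S_apply_le _ _) (h.norm_S_apply_le _ _)

variable [HasSolidNorm E] [IsOrderedAddMonoid E]

lemma P_nonneg (h : AsymptoticDomination l S T P M ε) [l.NeBot] {g : E} (hg : 0 ≤ g) :
    0 ≤ P g :=
  ge_of_tendsto' (h.tendsto_T g) fun t => h.T_nonneg t g hg

lemma eventually_norm_excess_lt (h : AsymptoticDomination l S T P M ε) {g : E} (hg : 0 ≤ g)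
    {b : ℝ} (hb : limsupExcess l S T g < b) : ∀ᶠ t in l, ‖excess S T t g‖ < b :=
  eventually_lt_of_limsup_lt hb <| isBoundedUnder_of ⟨M * ‖g‖, fun t =>
    (norm_posPart_sub_le (h.S_nonneg t g hg) (h.T_nonneg t g hg)).trans (h.norm_S_apply_le t g)⟩

/-- The key estimate. In `S (s + t) g = S s (S t g)` expand `S t g ≈ P g + excess t g`: the
positive vectors `excess s (P g)` and `S s (excess t g)` add in norm, and the norm of
`S s (excess t g)` is that of `T s (excess t g) ≈ P (excess t g)` plus that of its own excess. -/
lemma exists_excess_estimate (h : AsymptoticDomination l S T P M ε) [l.NeBot] {g : E}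
    (hg : 0 ≤ g) (t : J) : ∃ r : J → ℝ, Tendsto r l (𝓝 0) ∧ ∀ s,
      ‖excess S T s (P g)‖ + ε * ‖excess S T t g‖ + ‖excess S T s (excess S T t g)‖ ≤
        ‖excess S T (s + t) g‖ + M * (‖T t g - P g‖ + ‖deficit S T t g‖) + r s := by
  set q := excess S T t g
  have hq : 0 ≤ q := excess_nonneg S T t g
  refine ⟨fun s => ‖T (s + t) g - P g‖ + ‖deficit S T (s + t) g‖ + ‖deficit S T s (P g)‖ +
    ‖deficit S T s q‖ + ‖T s q - P q‖, ?_, fun s => ?_⟩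
  · simpa using (((((h.tendsto_norm_T_sub_P g).comp (h.tendsto_add_right t)).add
      ((h.tendsto_norm_deficit g hg).comp (h.tendsto_add_right t))).add
      (h.tendsto_norm_deficit _ (h.P_nonneg hg))).add (h.tendsto_norm_deficit q hq)).add
      (h.tendsto_norm_T_sub_P q)
  set X := S (s + t) g - (P g + excess S T s (P g) + S s q) with hX_def
  have hX : ‖X‖ ≤ M * (‖T t g - P g‖ + ‖deficit S T t g‖) + ‖deficit S T s (P g)‖ :=
    h.norm_S_add_apply_sub_le s t g
  have hsplit : excess S T s (P g) + S s q =
      excess S T (s + t) g + (T (s + t) g - P g) - deficit S T (s + t) g - X := by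
    have := excess_sub_deficit S T (s + t) g
    linear_combination (norm := abel) hX_def - this
  have hsum : ‖excess S T s (P g)‖ + ‖S s q‖ ≤
      ‖excess S T (s + t) g‖ + ‖T (s + t) g - P g‖ + ‖deficit S T (s + t) g‖ + ‖X‖ := by
    rw [← h.norm_add_of_nonneg _ _ (excess_nonneg S T s _) (h.S_nonneg s q hq), hsplit]
    have := norm_sub_le (excess S T (s + t) g + (T (s + t) g - P g) - deficit S T (s + t) g) X
    have := norm_sub_le (excess S T (s + t) g + (T (s + t) g - P g)) (deficit S T (s + t) g)
    have := norm_add_le (excess S T (s + t) g) (T (s + t) g - P g)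
    linarith
  have hT : ‖T s q‖ + ‖excess S T s q‖ ≤ ‖S s q‖ + ‖deficit S T s q‖ :=
    norm_add_norm_posPart_sub_le h.norm_add_of_nonneg (h.T_nonneg s q hq)
  have hP : ε * ‖q‖ ≤ ‖T s q‖ + ‖T s q - P q‖ :=
    (h.eps_mul_norm_le q hq).trans (norm_le_norm_add_norm_sub (T s q) (P q))
  linarith

/-- The key estimate for `P g`, which `T` fixes, at times `s` where `‖excess s (P g)‖` nearly
attains its limit superior. -/
lemma eps_mul_norm_excess_P_le (h : AsymptoticDomination l S T P M ε) [l.NeBot] {g : E}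
    (hg : 0 ≤ g) (t : J) :
    ε * ‖excess S T t (P g)‖ ≤ M * ‖deficit S T t (P g)‖ := by
  obtain ⟨r, hr, hest⟩ := h.exists_excess_estimate (h.P_nonneg hg) t
  simp only [h.P_apply_P, h.T_apply_P, sub_self, norm_zero, zero_add] at hest
  refine le_of_forall_pos_le_add_mul 3 fun σ hσ => ?_
  have hlater : ∀ᶠ s in l, ‖excess S T (s + t) (P g)‖ < limsupExcess l S T (P g) + σ ∧ r s < σ :=
    ((h.tendsto_add_right t).eventually (h.eventually_norm_excess_lt (h.P_nonneg hg)
      (lt_add_of_pos_right _ hσ))).and (hr.eventually (gt_mem_nhds hσ))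
  obtain ⟨s, hlarge, hexcess, hr⟩ := ((frequently_lt_norm_excess
    (sub_lt_self (limsupExcess l S T (P g)) hσ)).and_eventually hlater).exists
  linarith [hest s, norm_nonneg (excess S T s (excess S T t (P g)))]

lemma tendsto_norm_excess_P (h : AsymptoticDomination l S T P M ε) [l.NeBot] {g : E}
    (hg : 0 ≤ g) : Tendsto (fun t => ‖excess S T t (P g)‖) l (𝓝 0) := by
  refine squeeze_zero (fun _ => norm_nonneg _) (fun t => ?_)
    (by simpa using (h.tendsto_norm_deficit _ (h.P_nonneg hg)).const_mul (M / ε))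
  rw [div_mul_eq_mul_div, le_div_iff₀ h.eps_pos, mul_comm]
  exact h.eps_mul_norm_excess_P_le hg t

lemma limsupExcess_excess_add_le (h : AsymptoticDomination l S T P M ε) [l.NeBot] {g : E}
    (hg : 0 ≤ g) (t : J) :
    limsupExcess l S T (excess S T t g) + ε * ‖excess S T t g‖ ≤
      limsupExcess l S T g + M * (‖T t g - P g‖ + ‖deficit S T t g‖) := by
  obtain ⟨r, hr, hest⟩ := h.exists_excess_estimate hg t
  refine le_of_forall_pos_le_add_mul 2 fun σ hσ => ?_
  suffices limsupExcess l S T (excess S T t g) ≤ limsupExcess l S T g +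
      M * (‖T t g - P g‖ + ‖deficit S T t g‖) - ε * ‖excess S T t g‖ + 2 * σ by linarith
  refine limsupExcess_le ?_
  filter_upwards [(h.tendsto_add_right t).eventually
    (h.eventually_norm_excess_lt hg (lt_add_of_pos_right _ hσ)), hr.eventually (gt_mem_nhds hσ)]
    with s hlater hr
  linarith [hest s, norm_nonneg (excess S T s (P g))]

lemma orbitOscillation_le_two_mul_limsupExcess (h : AsymptoticDomination l S T P M ε) [l.NeBot]
    {g : E} (hg : 0 ≤ g) : orbitOscillation l S g ≤ 2 * limsupExcess l S T g := by
  refine le_of_forall_pos_le_add_mul 6 fun σ hσ => orbitOscillation_le ?_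
  have hnear : ∀ᶠ s in l, ‖S s g - P g‖ < limsupExcess l S T g + 3 * σ := by
    filter_upwards [h.eventually_norm_excess_lt hg (lt_add_of_pos_right _ hσ),
      (h.tendsto_norm_T_sub_P g).eventually (gt_mem_nhds hσ),
      (h.tendsto_norm_deficit g hg).eventually (gt_mem_nhds hσ)] with s hp hT hn
    have hdec : S s g - P g = (T s g - P g) + excess S T s g - deficit S T s g := by
      have := excess_sub_deficit S T s g
      linear_combination (norm := abel) -this
    rw [hdec]
    linarith [norm_sub_le ((T s g - P g) + excess S T s g) (deficit S T s g),
      norm_add_le (T s g - P g) (excess S T s g)]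
  filter_upwards [hnear.prod_inl l, hnear.prod_inr l] with z h1 h2
  linarith [norm_sub_le_norm_sub_add_norm_sub (S z.1 g) (P g) (S z.2 g),
    norm_sub_rev (P g) (S z.2 g)]

/-- `S (s + t) g ≈ P g + S s (excess t g)` for large `s`, because `excess s (P g) → 0`. -/
lemma orbitOscillation_le_orbitOscillation_excess_add (h : AsymptoticDomination l S T P M ε)
    [l.NeBot] {g : E} (hg : 0 ≤ g) (t : J) :
    orbitOscillation l S g ≤
      orbitOscillation l S (excess S T t g) + 2 * M * (‖T t g - P g‖ + ‖deficit S T t g‖) := by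
  set q := excess S T t g
  set e := ‖T t g - P g‖ + ‖deficit S T t g‖
  set X : J → E := fun s => S (s + t) g - (P g + excess S T s (P g) + S s q) with hX_def
  have hX (s : J) : ‖X s‖ ≤ M * e + ‖deficit S T s (P g)‖ := h.norm_S_add_apply_sub_le s t g
  have hmap : l ×ˢ l = map (Prod.map (· + t) (· + t)) (l ×ˢ l) := by
    rw [← prod_map_map_eq', h.map_add_right]
  refine le_of_forall_pos_le_add_mul 5 fun σ hσ => orbitOscillation_le ?_
  have hsmall : ∀ᶠ s in l, ‖excess S T s (P g)‖ < σ ∧ ‖deficit S T s (P g)‖ < σ :=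
    ((h.tendsto_norm_excess_P hg).eventually (gt_mem_nhds hσ)).and
      ((h.tendsto_norm_deficit _ (h.P_nonneg hg)).eventually (gt_mem_nhds hσ))
  rw [hmap, eventually_map]
  filter_upwards [h.eventually_lt_of_orbitOscillation_lt (g := q) (lt_add_of_pos_right _ hσ),
    hsmall.prod_inl l, hsmall.prod_inr l] with z hosc ⟨hp, hn⟩ ⟨hp', hn'⟩
  have hid : S (z.1 + t) g - S (z.2 + t) g = (X z.1 - X z.2) +
      (excess S T z.1 (P g) - excess S T z.2 (P g)) + (S z.1 q - S z.2 q) := by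
    simp only [hX_def]
    abel
  simp only [Prod.map_fst, Prod.map_snd]
  rw [hid]
  have := norm_sub_le (X z.1) (X z.2)
  have := norm_sub_le (excess S T z.1 (P g)) (excess S T z.2 (P g))
  linarith [norm_add₃_le (a := X z.1 - X z.2)
    (b := excess S T z.1 (P g) - excess S T z.2 (P g)) (c := S z.1 q - S z.2 q), hX z.1, hX z.2]

lemma orbitOscillation_le_mul_one_sub_eps (h : AsymptoticDomination l S T P M ε) [l.NeBot]
    {c : ℝ} (hc : 0 ≤ c) (H : ∀ f, 0 ≤ f → orbitOscillation l S f ≤ c * limsupExcess l S T f)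
    {g : E} (hg : 0 ≤ g) : orbitOscillation l S g ≤ c * (1 - ε) * limsupExcess l S T g := by
  refine le_of_forall_pos_le_add_mul (c * M + c * ε + 2 * M) fun σ hσ => ?_
  have hlim : Tendsto (fun t => ‖T t g - P g‖ + ‖deficit S T t g‖) l (𝓝 0) := by
    simpa using (h.tendsto_norm_T_sub_P g).add (h.tendsto_norm_deficit g hg)
  obtain ⟨t, hlarge, hsmall⟩ := ((frequently_lt_norm_excess (sub_lt_self (limsupExcess l S T g)
    hσ)).and_eventually (hlim.eventually (gt_mem_nhds hσ))).exists
  have hcontr := h.limsupExcess_excess_add_le hg t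
  have hM := h.M_nonneg
  have hε := h.eps_pos.le
  calc orbitOscillation l S g
      ≤ orbitOscillation l S (excess S T t g) + 2 * M * (‖T t g - P g‖ + ‖deficit S T t g‖) :=
        h.orbitOscillation_le_orbitOscillation_excess_add hg t
    _ ≤ c * (limsupExcess l S T g + M * (‖T t g - P g‖ + ‖deficit S T t g‖) -
          ε * ‖excess S T t g‖) + 2 * M * (‖T t g - P g‖ + ‖deficit S T t g‖) := by
        gcongr
        exact (H _ (excess_nonneg S T t g)).trans (by gcongr; linarith)
    _ ≤ c * (limsupExcess l S T g + M * σ - ε * (limsupExcess l S T g - σ)) + 2 * M * σ := by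
        gcongr
    _ = c * (1 - ε) * limsupExcess l S T g + (c * M + c * ε + 2 * M) * σ := by ring

lemma orbitOscillation_le_pow (h : AsymptoticDomination l S T P M ε) [l.NeBot] (hε1 : ε ≤ 1)
    (k : ℕ) {g : E} (hg : 0 ≤ g) :
    orbitOscillation l S g ≤ 2 * (1 - ε) ^ k * limsupExcess l S T g := by
  induction k generalizing g with
  | zero => simpa using h.orbitOscillation_le_two_mul_limsupExcess hg
  | succ k ih =>
    rw [pow_succ, ← mul_assoc]
    exact h.orbitOscillation_le_mul_one_sub_eps
      (mul_nonneg zero_le_two (pow_nonneg (sub_nonneg.2 hε1) k)) (fun f hf => ih hf) hg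

lemma orbitOscillation_nonpos (h : AsymptoticDomination l S T P M ε) [l.NeBot] (hε1 : ε ≤ 1)
    {g : E} (hg : 0 ≤ g) : orbitOscillation l S g ≤ 0 :=
  ge_of_tendsto' (by simpa using ((tendsto_pow_atTop_nhds_zero_of_lt_one (sub_nonneg.2 hε1)
      (sub_lt_self 1 h.eps_pos)).const_mul 2).mul_const (limsupExcess l S T g))
    fun k => h.orbitOscillation_le_pow hε1 k hg

lemma exists_tendsto_of_nonneg [CompleteSpace E] (h : AsymptoticDomination l S T P M ε)
    [l.NeBot] {g : E} (hg : 0 ≤ g) : ∃ x, Tendsto (fun t => S t g) l (𝓝 x) := by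
  have hosc := (h.of_le (lt_min h.eps_pos one_pos) (min_le_left _ _)).orbitOscillation_nonpos
    (min_le_right _ _) hg
  refine CompleteSpace.complete (cauchy_map_iff.2 ⟨inferInstance, ?_⟩)
  refine Metric.uniformity_basis_dist.tendsto_right_iff.2 fun γ hγ => ?_
  simpa [dist_eq_norm] using h.eventually_lt_of_orbitOscillation_lt (hosc.trans_lt hγ)

theorem exists_tendsto_apply [CompleteSpace E] (h : AsymptoticDomination l S T P M ε)
    [l.NeBot] : ∃ Q : E →L[ℝ] E, ∀ f, Tendsto (fun t => S t f) l (𝓝 (Q f)) := by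
  have hlim (f : E) : ∃ x, Tendsto (fun t => S t f) l (𝓝 x) := by
    obtain ⟨x, hx⟩ := h.exists_tendsto_of_nonneg (posPart_nonneg f)
    obtain ⟨y, hy⟩ := h.exists_tendsto_of_nonneg (negPart_nonneg f)
    exact ⟨x - y, by simpa only [← map_sub, posPart_sub_negPart] using hx.sub hy⟩
  choose q hq using hlim
  exact ⟨ContinuousLinearMap.ofTendstoOfBoundedRange q S (tendsto_pi_nhds.2 hq)
    (isBounded_iff_forall_norm_le.2 ⟨M, by rintro _ ⟨t, rfl⟩; exact h.norm_S_le t⟩), hq⟩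

end AsymptoticDomination

end Domination

section Reductions

variable {E : Type*} [NormedAddCommGroup E] [Lattice E] [NormedSpace ℝ E]

lemma pow_apply_nonneg {A : E →L[ℝ] E} (hA : ∀ f, 0 ≤ f → 0 ≤ A f) (n : ℕ) (f : E)
    (hf : 0 ≤ f) : 0 ≤ (A ^ n) f := by
  induction n generalizing f with
  | zero => exact hf
  | succ n ih => exact ih (A f) (hA f hf)

lemma map_add_right_atTop_posReal (t : {x : ℝ // 0 < x}) :
    map (· + t) (atTop : Filter {x : ℝ // 0 < x}) = atTop := by
  have hval : map ((↑) : {x : ℝ // 0 < x} → ℝ) atTop = atTop := map_val_Ioi_atTop (0 : ℝ)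
  rw [← map_inj Subtype.val_injective, map_map,
    show Subtype.val ∘ (· + t) = (· + (t : ℝ)) ∘ Subtype.val from rfl, ← map_map, hval,
    map_add_atTop_eq]

lemma asymptoticDomination_pow (hAL : ∀ f g : E, 0 ≤ f → 0 ≤ g → ‖f + g‖ = ‖f‖ + ‖g‖)
    {S T P : E →L[ℝ] E} {M ε : ℝ} (hS : ∀ f : E, 0 ≤ f → 0 ≤ S f) (hSM : ∀ n : ℕ, ‖S ^ n‖ ≤ M)
    (hT : ∀ f : E, 0 ≤ f → 0 ≤ T f)
    (hdom : ∀ f : E, 0 ≤ f → Tendsto (fun n : ℕ => ‖((S ^ n) f - (T ^ n) f)⁻‖) atTop (𝓝 0))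
    (hε : 0 < ε) (hTP : ∀ f : E, Tendsto (fun n : ℕ => (T ^ n) f) atTop (𝓝 (P f)))
    (hPε : ∀ f : E, 0 ≤ f → ε * ‖f‖ ≤ ‖P f‖) :
    AsymptoticDomination atTop (fun n : ℕ => S ^ n) (fun n => T ^ n) P M ε where
  norm_add_of_nonneg := hAL
  map_add_right := map_add_atTop_eq_nat
  S_add s t := pow_add S s t
  T_add s t := pow_add T s t
  S_nonneg := pow_apply_nonneg hS
  T_nonneg := pow_apply_nonneg hT
  norm_S_le := hSM
  tendsto_norm_deficit := hdom
  tendsto_T := hTP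
  eps_pos := hε
  eps_mul_norm_le := hPε

lemma asymptoticDomination_posReal (hAL : ∀ f g : E, 0 ≤ f → 0 ≤ g → ‖f + g‖ = ‖f‖ + ‖g‖)
    {S T : ℝ → E →L[ℝ] E} {P : E →L[ℝ] E} {M ε : ℝ}
    (hSadd : ∀ s t : ℝ, 0 < s → 0 < t → S (s + t) = (S s).comp (S t))
    (hTadd : ∀ s t : ℝ, 0 < s → 0 < t → T (s + t) = (T s).comp (T t))
    (hS : ∀ t : ℝ, 0 < t → ∀ f : E, 0 ≤ f → 0 ≤ S t f) (hSM : ∀ t : ℝ, 0 < t → ‖S t‖ ≤ M)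
    (hT : ∀ t : ℝ, 0 < t → ∀ f : E, 0 ≤ f → 0 ≤ T t f)
    (hdom : ∀ f : E, 0 ≤ f → Tendsto (fun t : ℝ => ‖(S t f - T t f)⁻‖) atTop (𝓝 0))
    (hε : 0 < ε) (hTP : ∀ f : E, Tendsto (fun t : ℝ => T t f) atTop (𝓝 (P f)))
    (hPε : ∀ f : E, 0 ≤ f → ε * ‖f‖ ≤ ‖P f‖) :
    AsymptoticDomination atTop (fun t : {x : ℝ // 0 < x} => S t) (fun t => T t) P M ε where
  norm_add_of_nonneg := hAL
  map_add_right := map_add_right_atTop_posReal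
  S_add s t := hSadd s t s.2 t.2
  T_add s t := hTadd s t s.2 t.2
  S_nonneg t := hS t t.2
  T_nonneg t := hT t t.2
  norm_S_le t := hSM t t.2
  tendsto_norm_deficit f hf := tendsto_comp_val_Ioi_atTop.2 (hdom f hf)
  tendsto_T f := tendsto_comp_val_Ioi_atTop.2 (hTP f)
  eps_pos := hε
  eps_mul_norm_le := hPε

end Reductions

/-- Let `(S_t)` and `(T_t)` be bounded positive semigroups on an AL-space such that `S`
asymptotically dominates `T`, i.e. `‖(S_t f - T_t f)⁻‖ → 0` for all positive `f`.  If
`(T_t)` converges strongly to an operator `P` with `‖Pf‖ ≥ ε ‖f‖` for all positive `f`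
and some `ε > 0`, then `(S_t)` converges strongly as well.  Both the time-discrete case
`J = ℕ` and the case `J = (0,∞)` are covered. -/
theorem dominating_semigroup_converges
    {E : Type*} [NormedAddCommGroup E] [Lattice E] [HasSolidNorm E] [IsOrderedAddMonoid E] [NormedSpace ℝ E] [CompleteSpace E]
    (hAL : ∀ f g : E, 0 ≤ f → 0 ≤ g → ‖f + g‖ = ‖f‖ + ‖g‖) :
    -- the time-discrete case `J = ℕ`
    (∀ S T : E →L[ℝ] E,
      (∀ f : E, 0 ≤ f → 0 ≤ S f) → (∃ M : ℝ, ∀ n : ℕ, ‖S ^ n‖ ≤ M) →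
      (∀ f : E, 0 ≤ f → 0 ≤ T f) → (∃ M : ℝ, ∀ n : ℕ, ‖T ^ n‖ ≤ M) →
      (∀ f : E, 0 ≤ f →
        Tendsto (fun n : ℕ => ‖((S ^ n) f - (T ^ n) f)⁻‖) atTop (𝓝 0)) →
      (∃ (P : E →L[ℝ] E) (ε : ℝ), 0 < ε ∧
        (∀ f : E, Tendsto (fun n : ℕ => (T ^ n) f) atTop (𝓝 (P f))) ∧
        (∀ f : E, 0 ≤ f → ε * ‖f‖ ≤ ‖P f‖)) →
      ∃ Q : E →L[ℝ] E, ∀ f : E, Tendsto (fun n : ℕ => (S ^ n) f) atTop (𝓝 (Q f))) ∧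
    -- the case `J = (0, ∞)`
    (∀ S T : ℝ → E →L[ℝ] E,
      (∀ s t : ℝ, 0 < s → 0 < t → S (s + t) = (S s).comp (S t)) →
      (∀ s t : ℝ, 0 < s → 0 < t → T (s + t) = (T s).comp (T t)) →
      (∀ t : ℝ, 0 < t → ∀ f : E, 0 ≤ f → 0 ≤ S t f) →
      (∃ M : ℝ, ∀ t : ℝ, 0 < t → ‖S t‖ ≤ M) →
      (∀ t : ℝ, 0 < t → ∀ f : E, 0 ≤ f → 0 ≤ T t f) →
      (∃ M : ℝ, ∀ t : ℝ, 0 < t → ‖T t‖ ≤ M) →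
      (∀ f : E, 0 ≤ f →
        Tendsto (fun t : ℝ => ‖(S t f - T t f)⁻‖) atTop (𝓝 0)) →
      (∃ (P : E →L[ℝ] E) (ε : ℝ), 0 < ε ∧
        (∀ f : E, Tendsto (fun t : ℝ => T t f) atTop (𝓝 (P f))) ∧
        (∀ f : E, 0 ≤ f → ε * ‖f‖ ≤ ‖P f‖)) →
      ∃ Q : E →L[ℝ] E, ∀ f : E, Tendsto (fun t : ℝ => S t f) atTop (𝓝 (Q f))) := by
  refine ⟨fun S T hS ⟨M, hSM⟩ hT _ hdom ⟨P, ε, hε, hTP, hPε⟩ =>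
      (asymptoticDomination_pow hAL hS hSM hT hdom hε hTP hPε).exists_tendsto_apply,
    fun S T hSadd hTadd hS ⟨M, hSM⟩ hT _ hdom ⟨P, ε, hε, hTP, hPε⟩ => ?_⟩
  obtain ⟨Q, hQ⟩ := (asymptoticDomination_posReal hAL hSadd hTadd hS hSM hT hdom hε hTP
    hPε).exists_tendsto_apply
  exact ⟨Q, fun f => tendsto_comp_val_Ioi_atTop.1 (hQ f)⟩
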